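/- For every q ∈ ℂ with 0.24 ≤ |q| ≤ 0.36 and arg(q) ∈ [π/4, π/2], and every x ∈ ℂ with |x| = |q|^{-3/2}, one has |θ(q,x)| ≥ 0.04588. -/

import Mathlib

/-- The partial theta function `θ(q,x) = Σ_{j≥0} q^(j(j+1)/2) x^j`. -/
noncomputable def theta (q x : ℂ) : ℂ := ∑' j : ℕ, q ^ (j * (j + 1) / 2) * x ^ j

/-- The argument of a complex number, normalized to take values in `[0, 2π)`. -/
noncomputable def argTwoPi (z : ℂ) : ℝ :=
  if Complex.arg z < 0 then Complex.arg z + 2 * Real.pi else Complex.arg z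

lemma key_ineq (q u v : ℂ) (hq : q ≠ 0) (huv : u * v = q)
    (habs : ‖u‖ = ‖v‖) :
    (‖q‖ - q.re) / (2 * ‖q‖) ≤ ‖1 + u + v‖ ^ 2 := by
  have hA : 0 < ‖q‖ := norm_pos_iff.mpr hq
  have hu : u ≠ 0 := by rintro rfl; rw [zero_mul] at huv; exact hq huv.symm
  have hv : v ≠ 0 := by rintro rfl; rw [mul_zero] at huv; exact hq huv.symm
  set ζ := u / v with hζdef
  have hζ : ‖ζ‖ = 1 := by
    rw [hζdef, norm_div, habs, div_self (norm_ne_zero_iff.mpr hv)]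
  set t : ℝ := 2 + 2 * ζ.re with htdef
  have hζre : |ζ.re| ≤ 1 := by
    have := Complex.abs_re_le_norm ζ; rwa [hζ] at this
  have ht : 0 ≤ t := by
    have := abs_le.1 hζre; simp only [htdef]; linarith [this.1]
  have hw2 : (u + v) ^ 2 = (t : ℝ) * q := by
    have h1 : (u + v) ^ 2 = (ζ + ζ⁻¹ + 2) * (u * v) := by
      rw [hζdef]; field_simp; ring
    rw [h1, Complex.inv_eq_conj hζ, huv]
    have : ζ + (starRingEnd ℂ) ζ = (2 * ζ.re : ℝ) := Complex.add_conj ζ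
    rw [this, htdef]; push_cast; ring
  set w := u + v with hw
  have hre : w.re ^ 2 - w.im ^ 2 = t * q.re := by
    have : (w ^ 2).re = ((t:ℝ) * q).re := by rw [hw2]
    simpa [sq, Complex.mul_re] using this
  have habs2 : w.re ^ 2 + w.im ^ 2 = t * ‖q‖ := by
    have h1 : ‖w‖ ^ 2 = ‖w ^ 2‖ := by rw [norm_pow]
    rw [hw2, norm_mul, Complex.norm_real, Real.norm_eq_abs, _root_.abs_of_nonneg ht] at h1
    have h2 : ‖w‖ ^ 2 = w.re ^ 2 + w.im ^ 2 := by
      rw [Complex.sq_norm, Complex.normSq_apply]; ring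
    linarith [h1, h2]
  have hgoal : ‖1 + u + v‖ ^ 2 = (1 + w.re) ^ 2 + w.im ^ 2 := by
    rw [add_assoc, ← hw, Complex.sq_norm, Complex.normSq_apply]
    simp [Complex.add_re, Complex.add_im]; ring
  rw [hgoal, div_le_iff₀ (by positivity)]
  have hR1 : q.re ≤ ‖q‖ := Complex.re_le_norm q
  have hR2 : -‖q‖ ≤ q.re := by
    have := Complex.abs_re_le_norm q; cases abs_le.1 this; linarith
  set A := ‖q‖
  set r := w.re
  set R := q.re
  have h2r : 2 * r ^ 2 = t * (A + R) := by linarith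
  have hs2 : (4 * A * r) ^ 2 = 4 * (A + R) * (2 * A ^ 2 * t) := by
    nlinarith [h2r]
  have hP : (0:ℝ) ≤ (A + R) + 2 * A ^ 2 * t := by nlinarith [mul_nonneg ht (sq_nonneg A)]
  have hsqle : (4 * A * r) ^ 2 ≤ ((A + R) + 2 * A ^ 2 * t) ^ 2 := by
    nlinarith [sq_nonneg ((A + R) - 2 * A ^ 2 * t)]
  have hXY : -((A + R) + 2 * A ^ 2 * t) ≤ 4 * A * r := (abs_le_of_sq_le_sq' hsqle hP).1
  nlinarith [hXY, habs2]

lemma nat_tri_cast (n : ℕ) : ((n * (n + 1) / 2 : ℕ) : ℝ) = (n : ℝ) * ((n : ℝ) + 1) / 2 := by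
  obtain ⟨k, hk⟩ := (Nat.even_mul_succ_self n).two_dvd
  rw [hk, Nat.mul_div_cancel_left k (by norm_num)]
  have : ((n * (n+1) : ℕ) : ℝ) = ((2 * k : ℕ) : ℝ) := by rw [hk]
  push_cast at this
  linarith

lemma term_abs (q x : ℂ) (ha0 : 0 < ‖q‖)
    (hx : ‖x‖ = ‖q‖ ^ (-(3 : ℝ) / 2 : ℝ)) (n : ℕ) :
    ‖q ^ (n * (n + 1) / 2) * x ^ n‖
      = ‖q‖ ^ ((n : ℝ) * ((n : ℝ) + 1) / 2 - 3 * n / 2 : ℝ) := by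
  rw [norm_mul, norm_pow, norm_pow, hx]
  rw [← Real.rpow_natCast (‖q‖) (n * (n + 1) / 2), nat_tri_cast]
  rw [← Real.rpow_natCast (‖q‖ ^ (-(3 : ℝ) / 2 : ℝ)) n,
    ← Real.rpow_mul ha0.le, ← Real.rpow_add ha0]
  ring_nf

lemma rpow_036 (e : ℝ) : (0.36 : ℝ) ^ (e : ℝ) = (0.6 : ℝ) ^ (2 * e : ℝ) := by
  rw [show (0.36 : ℝ) = (0.6 : ℝ) ^ (2 : ℝ) by
    rw [show (2:ℝ) = ((2:ℕ):ℝ) by norm_num, Real.rpow_natCast]; norm_num]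
  rw [← Real.rpow_mul (by norm_num)]

theorem theta_lower_bound_q_024_036 (q : ℂ) (hq : 0.24 ≤ ‖q‖ ∧ ‖q‖ ≤ 0.36)
    (harg : argTwoPi q ∈ Set.Icc (Real.pi / 4) (Real.pi / 2)) (x : ℂ)
    (hx : ‖x‖ = ‖q‖ ^ (-(3 : ℝ) / 2 : ℝ)) :
    0.04588 ≤ ‖theta q x‖ := by
  obtain ⟨hq1, hq2⟩ := hq
  set a := ‖q‖ with ha
  have ha0 : 0 < a := lt_of_lt_of_le (by norm_num) hq1
  have ha1 : a ≤ 1 := le_trans hq2 (by norm_num)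
  have hq0 : q ≠ 0 := by
    intro h; rw [h] at ha; simp [ha] at ha0
  have hx0 : x ≠ 0 := by
    intro h; rw [h] at hx; simp at hx
    have := Real.rpow_pos_of_pos ha0 (-(3:ℝ)/2); rw [← hx] at this; exact lt_irrefl 0 this
  -- argument bounds
  have hargq : Real.pi / 4 ≤ Complex.arg q ∧ Complex.arg q ≤ Real.pi / 2 := by
    obtain ⟨h1, h2⟩ := harg
    unfold argTwoPi at h1 h2
    split_ifs at h1 h2 with h
    · exfalso
      have := Complex.neg_pi_lt_arg q
      have hpi := Real.pi_pos
      linarith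
    · exact ⟨h1, h2⟩
  -- Re q ≤ a * (√2/2)
  have hcos : Real.cos (Complex.arg q) ≤ Real.sqrt 2 / 2 := by
    rw [← Real.cos_pi_div_four]
    apply Real.cos_le_cos_of_nonneg_of_le_pi
    · positivity
    · linarith [Real.pi_pos, hargq.2]
    · exact hargq.1
  have hre : q.re ≤ a * (Real.sqrt 2 / 2) := by
    have h := Complex.cos_arg hq0
    have : q.re = a * Real.cos (Complex.arg q) := by
      rw [h]; field_simp; rfl
    rw [this]
    exact mul_le_mul_of_nonneg_left hcos ha0.le
  have hsqrt2 : Real.sqrt 2 ≤ 1.41422 := by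
    rw [show (1.41422:ℝ) = Real.sqrt (1.41422^2) by
      rw [Real.sqrt_sq (by norm_num)]]
    apply Real.sqrt_le_sqrt; norm_num
  -- moduli
  have hqx : ‖q * x‖ = a ^ ((-1 : ℝ)/2 : ℝ) := by
    rw [norm_mul, hx, ← ha]
    nth_rewrite 1 [← Real.rpow_one a]
    rw [← Real.rpow_add ha0]; norm_num
  have huabs : ‖(q * x)⁻¹‖ = a ^ ((1 : ℝ)/2 : ℝ) := by
    rw [norm_inv, hqx, ← Real.rpow_neg ha0.le]; norm_num
  have hvabs : ‖q ^ 2 * x‖ = a ^ ((1 : ℝ)/2 : ℝ) := by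
    rw [norm_mul, norm_pow, hx, ← ha, ← Real.rpow_natCast a 2, ← Real.rpow_add ha0]
    norm_num
  have ha12 : a ^ ((1 : ℝ)/2 : ℝ) ≤ 0.6 := by
    calc a ^ ((1 : ℝ)/2 : ℝ) ≤ (0.36 : ℝ) ^ ((1 : ℝ)/2 : ℝ) :=
          Real.rpow_le_rpow ha0.le hq2 (by norm_num)
      _ = 0.6 := by rw [rpow_036]; norm_num
  have ha12pos : 0 < a ^ ((1 : ℝ)/2 : ℝ) := Real.rpow_pos_of_pos ha0 _
  have hqxge : (5/3 : ℝ) ≤ ‖q * x‖ := by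
    rw [hqx, show ((-1:ℝ)/2 : ℝ) = -(1/2 : ℝ) by norm_num, Real.rpow_neg ha0.le]
    rw [show (5/3 : ℝ) = (0.6 : ℝ)⁻¹ by norm_num]
    exact inv_anti₀ ha12pos ha12
  -- key inequality applied
  have huv : (q * x)⁻¹ * (q ^ 2 * x) = q := by
    field_simp
  have hkey := key_ineq q ((q * x)⁻¹) (q ^ 2 * x) hq0 huv (by rw [huabs, hvabs])
  have hlow : (0.146 : ℝ) ≤ (a - q.re) / (2 * a) := by
    rw [le_div_iff₀ (by positivity)]
    nlinarith [hsqrt2, hre, hq1, hq2, Real.sqrt_nonneg 2]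
  have hS1 : (0.382 : ℝ) ≤ ‖1 + (q * x)⁻¹ + q ^ 2 * x‖ := by
    have h1 : (0.382:ℝ)^2 ≤ ‖1 + (q * x)⁻¹ + q ^ 2 * x‖ ^ 2 := by
      calc (0.382:ℝ)^2 ≤ 0.146 := by norm_num
        _ ≤ (a - q.re) / (2 * a) := hlow
        _ ≤ _ := hkey
    exact le_of_sq_le_sq h1 (norm_nonneg _)
  have hfac : (1 : ℂ) + q * x + q ^ 3 * x ^ 2 = (q * x) * (1 + (q * x)⁻¹ + q ^ 2 * x) := by
    field_simp; ring
  have hS : (0.6366 : ℝ) ≤ ‖1 + q * x + q ^ 3 * x ^ 2‖ := by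
    rw [hfac, norm_mul]
    calc (0.6366 : ℝ) ≤ (5/3) * 0.382 := by norm_num
      _ ≤ ‖q * x‖ * ‖1 + (q * x)⁻¹ + q ^ 2 * x‖ :=
          mul_le_mul hqxge hS1 (by norm_num) (norm_nonneg _)
  -- tail
  set f : ℕ → ℂ := fun j => q ^ (j * (j + 1) / 2) * x ^ j with hf
  have hbound : ∀ j : ℕ, ‖f (j + 3)‖ ≤ 0.216 * 0.13 ^ j := by
    intro j
    have h1 : ‖f (j + 3)‖
        = a ^ (((j:ℝ)+3) * (((j:ℝ)+3) + 1) / 2 - 3 * ((j:ℕ)+3) / 2 : ℝ) := by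
      rw [hf]; beta_reduce
      rw [term_abs q x ha0 hx (j + 3)]
      push_cast; ring_nf; rfl
    rw [h1]
    have h2 : a ^ (((j:ℝ)+3) * (((j:ℝ)+3) + 1) / 2 - 3 * ((j:ℕ)+3) / 2 : ℝ)
        ≤ a ^ ((3:ℝ)/2 + 2 * j : ℝ) := by
      apply Real.rpow_le_rpow_of_exponent_ge ha0 ha1
      push_cast
      nlinarith [sq_nonneg (j:ℝ)]
    have h3 : a ^ ((3:ℝ)/2 + 2 * j : ℝ) = a ^ ((3:ℝ)/2) * (a ^ (2:ℝ)) ^ j := by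
      rw [Real.rpow_add ha0, ← Real.rpow_natCast (a ^ (2:ℝ)) j, ← Real.rpow_mul ha0.le]
    have h4 : a ^ ((3:ℝ)/2 : ℝ) ≤ 0.216 := by
      calc a ^ ((3:ℝ)/2 : ℝ) ≤ (0.36:ℝ) ^ ((3:ℝ)/2 : ℝ) :=
            Real.rpow_le_rpow ha0.le hq2 (by norm_num)
        _ = 0.216 := by
            rw [rpow_036, show (2 * ((3:ℝ)/2) : ℝ) = ((3:ℕ):ℝ) by norm_num,
              Real.rpow_natCast]; norm_num
    have h5 : a ^ ((2:ℝ) : ℝ) ≤ 0.13 := by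
      calc a ^ ((2:ℝ) : ℝ) = a ^ (2:ℕ) := by
            rw [show ((2:ℝ)) = ((2:ℕ):ℝ) by norm_num, Real.rpow_natCast]
        _ ≤ 0.36 ^ (2:ℕ) := pow_le_pow_left₀ ha0.le hq2 2
        _ ≤ 0.13 := by norm_num
    calc a ^ (((j:ℝ)+3) * (((j:ℝ)+3) + 1) / 2 - 3 * ((j:ℕ)+3) / 2 : ℝ)
        ≤ a ^ ((3:ℝ)/2) * (a ^ (2:ℝ)) ^ j := by rw [← h3]; exact h2
      _ ≤ 0.216 * 0.13 ^ j := by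
          apply mul_le_mul h4 (pow_le_pow_left₀ (Real.rpow_nonneg ha0.le _) h5 j)
            (by positivity) (by norm_num)
  have hgeo : Summable (fun j : ℕ => (0.216 : ℝ) * 0.13 ^ j) :=
    (summable_geometric_of_lt_one (by norm_num) (by norm_num)).mul_left _
  have hnorm3 : Summable (fun j : ℕ => ‖f (j + 3)‖) :=
    Summable.of_nonneg_of_le (fun j => norm_nonneg _) hbound hgeo
  have hnorm : Summable (fun j : ℕ => ‖f j‖) := (summable_nat_add_iff 3).1 hnorm3
  have hsum : Summable f := hnorm.of_norm
  have htail : ‖∑' j : ℕ, f (j + 3)‖ ≤ 0.249 := by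
    calc ‖∑' j : ℕ, f (j + 3)‖ ≤ ∑' j : ℕ, ‖f (j + 3)‖ := norm_tsum_le_tsum_norm hnorm3
      _ ≤ ∑' j : ℕ, (0.216 : ℝ) * 0.13 ^ j := Summable.tsum_le_tsum hbound hnorm3 hgeo
      _ = 0.216 * (1 - 0.13)⁻¹ := by
          rw [tsum_mul_left, tsum_geometric_of_lt_one (by norm_num) (by norm_num)]
      _ ≤ 0.249 := by norm_num
  -- assemble
  have hsplit : ∑ i ∈ Finset.range 3, f i + ∑' i : ℕ, f (i + 3) = ∑' i : ℕ, f i :=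
    Summable.sum_add_tsum_nat_add 3 hsum
  have hrange : ∑ i ∈ Finset.range 3, f i = 1 + q * x + q ^ 3 * x ^ 2 := by
    rw [Finset.sum_range_succ, Finset.sum_range_succ, Finset.sum_range_one, hf]
    norm_num
  have htheta : theta q x = (1 + q * x + q ^ 3 * x ^ 2) + ∑' i : ℕ, f (i + 3) := by
    rw [theta, ← hsplit, hrange]
  rw [htheta]
  have h := norm_add_le ((1 + q * x + q ^ 3 * x ^ 2) + ∑' i : ℕ, f (i + 3))
    (-(∑' i : ℕ, f (i + 3)))
  simp only [add_neg_cancel_right, norm_neg] at h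
  linarith [hS, htail, h]
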